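/- Let B ∈ ℝ³ with b = |B| > 0 and let h > 0 satisfy hb < π. Let P₀, P₁, P₋₁ ∈ ℂ^{3×3} be the orthogonal projections onto the eigenspaces of the complexified matrix B̂ for the eigenvalues 0, −ib, +ib. Then: (i) P₀ · (2/h)tanh(−(h/2)B̂) = 0; (ii) P_{±1} · (2/h)tanh(−(h/2)B̂) = ±i (2/h) tan(hb/2) P_{±1}; (iii) P₀ · Ψ(−hB̂) = P₀ and P_{±1} · Ψ(−hB̂) = Ψ(±ihb) P_{±1}, where Ψ(ζ) = tanch(ζ/2) with tanch(ζ) = tanh(ζ)/ζ extended by 1 at ζ = 0, and where matrix functions are defined by the power series. -/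

import Mathlib

noncomputable section

attribute [local instance] Matrix.normedAddCommGroup Matrix.normedSpace

open Real (pi)

/-- The complexified skew-symmetric matrix `B̂` associated with `B ∈ ℝ³`. -/
def hatC (B : Fin 3 → ℝ) : Matrix (Fin 3) (Fin 3) ℂ :=
  !![0, -B 2, B 1; B 2, 0, -B 0; -B 1, B 0, 0]

/-- The Euclidean norm of a vector in `ℝ³`. -/
def enorm3 (B : Fin 3 → ℝ) : ℝ := Real.sqrt (B 0 ^ 2 + B 1 ^ 2 + B 2 ^ 2)

/-- The Taylor coefficients of `tanh` at `0`. -/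
def tanhCoeff (n : ℕ) : ℝ := iteratedDeriv n Real.tanh 0 / n.factorial

/-- `tanh` of a complex matrix, defined by the power series of `tanh` at `0`. -/
def tanhMatC (A : Matrix (Fin 3) (Fin 3) ℂ) : Matrix (Fin 3) (Fin 3) ℂ :=
  ∑' n : ℕ, (tanhCoeff n : ℂ) • A ^ n

/-- The Taylor coefficients at `0` of the filter function `Ψ(ζ) = tanch(ζ/2)`,
where `tanch(ζ) = tanh(ζ)/ζ` extended by `1` at `0`. -/
def PsiCoeff (n : ℕ) : ℝ := tanhCoeff (n + 1) / 2 ^ n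

/-- The filter function `Ψ(ζ) = tanch(ζ/2)` of a complex matrix, via its power series. -/
def PsiMatC (A : Matrix (Fin 3) (Fin 3) ℂ) : Matrix (Fin 3) (Fin 3) ℂ :=
  ∑' n : ℕ, (PsiCoeff n : ℂ) • A ^ n

/-- The scalar function `Ψ(ζ) = tanch(ζ/2)`, via its power series. -/
def PsiFun (z : ℂ) : ℂ := ∑' n : ℕ, (PsiCoeff n : ℂ) * z ^ n

/-!
Since `B̂` is real and skew-symmetric, taking conjugate transposes turns `B̂ P = λ P` for a
Hermitian `P` and purely imaginary `λ` into `P B̂ = λ P`, so `P f(c B̂) = f(c λ) P` term by term for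
any power series `f`. The matrix series converge because `B̂ = -ib P₁ + ib P₋₁`, where `P₁, P₋₁`
are orthogonal idempotents (left and right eigenvectors for distinct eigenvalues), which reduces
them to scalar series. The Taylor series of `tanh` at `0` converges on `‖z‖ < π/2` because `cosh`
has no zero there, hence that of `Ψ` on `‖z‖ < π`; finally `tanh (ix) = i tan x`.
-/

open Complex
open scoped Real

theorem Complex.cosh_ne_zero_of_norm_lt {z : ℂ} (hz : ‖z‖ < π / 2) : cosh z ≠ 0 := by
  rw [← cos_mul_I, Ne, cos_eq_zero_iff]
  rintro ⟨k, hk⟩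
  have hodd : (1 : ℝ) ≤ |2 * (k : ℝ) + 1| := by
    exact_mod_cast Int.one_le_abs (show 2 * k + 1 ≠ 0 by omega)
  have hnorm : ‖z * I‖ = |2 * (k : ℝ) + 1| * (π / 2) := by
    rw [hk, show (2 * (k : ℂ) + 1) * π / 2 = ((2 * (k : ℝ) + 1) * (π / 2) : ℝ) by push_cast; ring,
      norm_real, Real.norm_eq_abs, abs_mul, abs_of_pos (by positivity : 0 < π / 2)]
  rw [norm_mul, norm_I, mul_one] at hnorm
  nlinarith [Real.pi_pos]

theorem Complex.analyticOnNhd_tanh : AnalyticOnNhd ℂ tanh {z | cosh z ≠ 0} := fun z hz => by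
  rw [show tanh = sinh / cosh from funext tanh_eq_sinh_div_cosh]
  exact analyticAt_sinh.div analyticAt_cosh hz

theorem deriv_eq_ofReal_deriv {f : ℂ → ℂ} {g : ℝ → ℝ} (hfg : ∀ y : ℝ, f y = g y) {x : ℝ}
    (hf : DifferentiableAt ℂ f x) : deriv f x = deriv g x := by
  have hg : HasDerivAt g (deriv f x).re x := by
    simpa only [hfg, ofReal_re] using hf.hasDerivAt.real_of_complex
  have hfg' : HasDerivAt (fun y : ℝ => (g y : ℂ)) (deriv f x) x := by
    simpa only [hfg] using hf.hasDerivAt.comp_ofReal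
  rw [hg.deriv]
  exact hfg'.unique hg.ofReal_comp

theorem iteratedDeriv_eq_ofReal_iteratedDeriv {f : ℂ → ℂ} {g : ℝ → ℝ} {s : Set ℂ}
    (hf : AnalyticOnNhd ℂ f s) (hs : ∀ y : ℝ, (y : ℂ) ∈ s) (hfg : ∀ y : ℝ, f y = g y)
    (n : ℕ) (x : ℝ) :
    iteratedDeriv n f x = iteratedDeriv n g x := by
  induction n generalizing x with
  | zero => simpa only [iteratedDeriv_zero] using hfg x
  | succ n ih =>
    rw [iteratedDeriv_succ, iteratedDeriv_succ]
    refine deriv_eq_ofReal_deriv ih ?_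
    rw [iteratedDeriv_eq_iterate]
    exact (hf.iterated_deriv n _ (hs x)).differentiableAt

theorem iteratedDeriv_tanh_ofReal (n : ℕ) (x : ℝ) :
    iteratedDeriv n tanh x = iteratedDeriv n Real.tanh x :=
  iteratedDeriv_eq_ofReal_iteratedDeriv analyticOnNhd_tanh
    (fun y => by simpa [← ofReal_cosh] using (Real.cosh_pos y).ne')
    (fun y => (ofReal_tanh y).symm) n x

theorem hasSum_tanhCoeff_mul_pow {z : ℂ} (hz : ‖z‖ < π / 2) :
    HasSum (fun n => (tanhCoeff n : ℂ) * z ^ n) (tanh z) := by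
  have hdiff : DifferentiableOn ℂ tanh (Metric.ball 0 (π / 2)) := fun w hw =>
    (analyticOnNhd_tanh w
      (cosh_ne_zero_of_norm_lt (mem_ball_zero_iff.mp hw))).differentiableWithinAt
  convert hasSum_taylorSeries_on_ball hdiff (mem_ball_zero_iff.mpr hz) using 1
  · rfl
  funext n
  rw [sub_zero, ← ofReal_zero, iteratedDeriv_tanh_ofReal, tanhCoeff, smul_eq_mul, smul_eq_mul]
  push_cast
  ring

theorem Real.deriv_tanh_zero : deriv Real.tanh 0 = 1 := by
  have h := (Real.hasDerivAt_sinh 0).div (Real.hasDerivAt_cosh 0) (Real.cosh_pos 0).ne'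
  rw [show Real.sinh / Real.cosh = Real.tanh from
    funext fun x => (Real.tanh_eq_sinh_div_cosh x).symm] at h
  simp [h.deriv]

theorem PsiFun_zero : PsiFun 0 = 1 := by
  rw [PsiFun, tsum_eq_single 0 fun n hn => by simp [zero_pow hn]]
  simp [PsiCoeff, tanhCoeff, Real.deriv_tanh_zero]

theorem summable_PsiCoeff_mul_pow {w : ℂ} (hw : ‖w‖ < π) :
    Summable fun n => (PsiCoeff n : ℂ) * w ^ n := by
  rcases eq_or_ne w 0 with rfl | hw0
  · exact summable_of_ne_finset_zero (s := {0}) fun n hn => by simp [zero_pow (by simpa using hn)]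
  have htail := (summable_nat_add_iff 1).mpr
    (hasSum_tanhCoeff_mul_pow (z := w / 2) (by rw [norm_div, norm_ofNat]; linarith)).summable
  refine (htail.mul_right (2 / w)).congr fun n => ?_
  simp only [PsiCoeff]
  push_cast
  rw [div_pow]
  field_simp
  ring

section SpectralAction

variable {S R : Type*}

theorem IsSelfAdjoint.mul_eq_smul_of_mem_skewAdjoint [CommRing S] [StarRing S] [Ring R]
    [StarRing R] [Module S R] [StarModule S R] {A P : R} {μ : S} (hP : IsSelfAdjoint P)
    (hA : A ∈ skewAdjoint R) (hμ : μ ∈ skewAdjoint S) (h : A * P = μ • P) : P * A = μ • P := by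
  have h' := congrArg star h
  rw [star_mul, star_smul, hP.star_eq, skewAdjoint.mem_iff.mp hA, skewAdjoint.mem_iff.mp hμ,
    mul_neg, neg_smul] at h'
  exact neg_injective h'

theorem mul_eq_zero_of_mul_eq_smul_of_ne [Field S] [Ring R] [Algebra S R] {A P Q : R} {μ ν : S}
    (hP : P * A = μ • P) (hQ : A * Q = ν • Q) (hμν : μ ≠ ν) : P * Q = 0 := by
  have h : (μ - ν) • (P * Q) = 0 := by
    rw [sub_smul, ← smul_mul_assoc, ← hP, ← mul_smul_comm, ← hQ, mul_assoc, sub_self]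
  exact (smul_eq_zero.mp h).resolve_left (sub_ne_zero.mpr hμν)

theorem mul_pow_eq_smul_of_mul_eq_smul [CommSemiring S] [Semiring R] [Algebra S R] {A P : R}
    {μ : S} (h : P * A = μ • P) (n : ℕ) : P * A ^ n = μ ^ n • P := by
  induction n with
  | zero => simp
  | succ n ih => rw [pow_succ, ← mul_assoc, ih, smul_mul_assoc, h, smul_smul, pow_succ]

theorem smul_add_smul_pow_succ [CommSemiring S] [Semiring R] [Algebra S R] {P Q : R}
    (hP : IsIdempotentElem P) (hQ : IsIdempotentElem Q) (hPQ : P * Q = 0) (hQP : Q * P = 0)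
    (a b : S) (n : ℕ) : (a • P + b • Q) ^ (n + 1) = a ^ (n + 1) • P + b ^ (n + 1) • Q := by
  induction n with
  | zero => simp
  | succ n ih =>
    rw [pow_succ, ih]
    simp only [add_mul, mul_add, smul_mul_smul_comm, hP.eq, hQ.eq, hPQ, hQP, smul_zero,
      add_zero, zero_add, ← pow_succ]

theorem summable_smul_pow_smul_add_smul [CommRing S] [TopologicalSpace S]
    [IsTopologicalAddGroup S] [Ring R] [Algebra S R] [TopologicalSpace R]
    [IsTopologicalAddGroup R] [ContinuousSMul S R] {P Q : R}
    (hP : IsIdempotentElem P) (hQ : IsIdempotentElem Q) (hPQ : P * Q = 0) (hQP : Q * P = 0)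
    {c : ℕ → S} {a b : S} (ha : Summable fun n => c n * a ^ n)
    (hb : Summable fun n => c n * b ^ n) : Summable fun n => c n • (a • P + b • Q) ^ n := by
  refine (summable_nat_add_iff 1).mp <|
    ((((summable_nat_add_iff 1).mpr ha).smul_const P).add
      (((summable_nat_add_iff 1).mpr hb).smul_const Q)).congr fun n => ?_
  rw [smul_add_smul_pow_succ hP hQ hPQ hQP, smul_add, smul_smul, smul_smul]

theorem mul_tsum_smul_pow_eq_smul [CommSemiring S] [TopologicalSpace S] [Semiring R]
    [Algebra S R] [TopologicalSpace R] [IsTopologicalSemiring R] [ContinuousSMul S R] [T2Space R]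
    {A P : R} {μ : S} (h : P * A = μ • P) {c : ℕ → S} (hA : Summable fun n => c n • A ^ n)
    (hμ : Summable fun n => c n * μ ^ n) :
    P * ∑' n, c n • A ^ n = (∑' n, c n * μ ^ n) • P := by
  simp_rw [← hA.tsum_mul_left, mul_smul_comm, mul_pow_eq_smul_of_mul_eq_smul h, smul_smul]
  exact hμ.tsum_smul_const P

theorem summable_smul_pow_smul_of_eigenprojections [Field S] [StarRing S] [TopologicalSpace S]
    [IsTopologicalAddGroup S] [Ring R] [StarRing R] [Algebra S R] [StarModule S R]
    [TopologicalSpace R] [IsTopologicalAddGroup R] [ContinuousSMul S R] {A P₀ P₁ P₂ : R} {μ ν : S}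
    (hA : A ∈ skewAdjoint R) (hμ : μ ∈ skewAdjoint S) (hν : ν ∈ skewAdjoint S) (hμν : μ ≠ ν)
    (hsum : P₀ + P₁ + P₂ = 1) (hP₁ : IsSelfAdjoint P₁) (hP₂ : IsSelfAdjoint P₂)
    (hP₁' : IsIdempotentElem P₁) (hP₂' : IsIdempotentElem P₂) (h₀ : A * P₀ = 0)
    (h₁ : A * P₁ = μ • P₁) (h₂ : A * P₂ = ν • P₂) (t : S) {c : ℕ → S}
    (hc₁ : Summable fun n => c n * (t * μ) ^ n) (hc₂ : Summable fun n => c n * (t * ν) ^ n) :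
    Summable fun n => c n • (t • A) ^ n := by
  have hdecomp : t • A = (t * μ) • P₁ + (t * ν) • P₂ := by
    rw [← mul_one A, ← hsum, mul_add, mul_add, h₀, h₁, h₂, zero_add, smul_add, smul_smul,
      smul_smul]
  rw [hdecomp]
  exact summable_smul_pow_smul_add_smul hP₁' hP₂'
    (mul_eq_zero_of_mul_eq_smul_of_ne (hP₁.mul_eq_smul_of_mem_skewAdjoint hA hμ h₁) h₂ hμν)
    (mul_eq_zero_of_mul_eq_smul_of_ne (hP₂.mul_eq_smul_of_mem_skewAdjoint hA hν h₂) h₁ hμν.symm)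
    hc₁ hc₂

end SpectralAction

theorem mul_tanhMatC_smul_eq_smul {A P : Matrix (Fin 3) (Fin 3) ℂ} {μ : ℂ} (h : P * A = μ • P)
    {c : ℂ} (hA : Summable fun n => (tanhCoeff n : ℂ) • (c • A) ^ n) (hμ : ‖c * μ‖ < π / 2) :
    P * tanhMatC (c • A) = tanh (c * μ) • P := by
  have hc : P * (c • A) = (c * μ) • P := by rw [mul_smul_comm, h, smul_smul]
  rw [tanhMatC, mul_tsum_smul_pow_eq_smul hc hA (hasSum_tanhCoeff_mul_pow hμ).summable,
    (hasSum_tanhCoeff_mul_pow hμ).tsum_eq]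

theorem mul_PsiMatC_smul_eq_smul {A P : Matrix (Fin 3) (Fin 3) ℂ} {μ : ℂ} (h : P * A = μ • P)
    {c : ℂ} (hA : Summable fun n => (PsiCoeff n : ℂ) • (c • A) ^ n) (hμ : ‖c * μ‖ < π) :
    P * PsiMatC (c • A) = PsiFun (c * μ) • P :=
  mul_tsum_smul_pow_eq_smul (by rw [mul_smul_comm, h, smul_smul]) hA (summable_PsiCoeff_mul_pow hμ)

theorem hatC_mem_skewAdjoint (B : Fin 3 → ℝ) :
    hatC B ∈ skewAdjoint (Matrix (Fin 3) (Fin 3) ℂ) := by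
  rw [skewAdjoint.mem_iff]
  ext i j
  fin_cases i <;> fin_cases j <;> simp [hatC]

theorem stmt6_general (B : Fin 3 → ℝ) (h : ℝ) (hb : 0 < enorm3 B) (hh : 0 < h)
    (hres : h * enorm3 B < pi)
    (P0 P1 Pm1 : Matrix (Fin 3) (Fin 3) ℂ)
    (hsum : P0 + P1 + Pm1 = 1)
    (horth0 : P0.IsHermitian)
    (horth1 : P1.IsHermitian) (hidem1 : P1 * P1 = P1)
    (horthm1 : Pm1.IsHermitian) (hidemm1 : Pm1 * Pm1 = Pm1)
    (heig0 : hatC B * P0 = 0)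
    (heig1 : hatC B * P1 = (-(Complex.I * (enorm3 B : ℂ))) • P1)
    (heigm1 : hatC B * Pm1 = (Complex.I * (enorm3 B : ℂ)) • Pm1) :
    P0 * ((2 / h : ℂ) • tanhMatC ((-(h / 2) : ℂ) • hatC B)) = 0 ∧
    P1 * ((2 / h : ℂ) • tanhMatC ((-(h / 2) : ℂ) • hatC B)) =
        (Complex.I * (2 / h) * Real.tan (h * enorm3 B / 2)) • P1 ∧
    Pm1 * ((2 / h : ℂ) • tanhMatC ((-(h / 2) : ℂ) • hatC B)) =
        (-(Complex.I * (2 / h) * Real.tan (h * enorm3 B / 2))) • Pm1 ∧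
    P0 * PsiMatC ((-h : ℂ) • hatC B) = P0 ∧
    P1 * PsiMatC ((-h : ℂ) • hatC B) =
        PsiFun (Complex.I * (h * enorm3 B)) • P1 ∧
    Pm1 * PsiMatC ((-h : ℂ) • hatC B) =
        PsiFun (-(Complex.I * (h * enorm3 B))) • Pm1 := by
  set b := enorm3 B
  have hskew := hatC_mem_skewAdjoint B
  have hIb : I * (b : ℂ) ∈ skewAdjoint ℂ := by simp [skewAdjoint.mem_iff]
  have hne : -(I * (b : ℂ)) ≠ I * b := by
    simpa [neg_eq_iff_add_eq_zero, ← two_mul, I_ne_zero] using hb.ne'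
  have hleft0 : P0 * hatC B = (0 : ℂ) • P0 := horth0.isSelfAdjoint.mul_eq_smul_of_mem_skewAdjoint
    hskew (zero_mem _) (by rw [heig0, zero_smul])
  have hleft1 := horth1.isSelfAdjoint.mul_eq_smul_of_mem_skewAdjoint hskew (neg_mem hIb) heig1
  have hleftm1 := horthm1.isSelfAdjoint.mul_eq_smul_of_mem_skewAdjoint hskew hIb heigm1
  have hsummable := summable_smul_pow_smul_of_eigenprojections hskew (neg_mem hIb) hIb hne hsum
    horth1.isSelfAdjoint horthm1.isSelfAdjoint hidem1 hidemm1 heig0 heig1 heigm1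
  have hz : ‖(-(h / 2) : ℂ) * (I * b)‖ < π / 2 := by
    simp only [neg_mul, norm_neg, norm_mul, norm_div, norm_real, Real.norm_eq_abs, abs_of_pos hh,
      norm_ofNat, norm_I, abs_of_pos hb, one_mul]
    linarith
  have hw : ‖(-h : ℂ) * (I * b)‖ < π := by simpa [abs_of_pos hh, abs_of_pos hb] using hres
  have htanh := hsummable (-(h / 2))
    (hasSum_tanhCoeff_mul_pow (by rwa [mul_neg, norm_neg])).summable
    (hasSum_tanhCoeff_mul_pow hz).summable
  have hPsi := hsummable (-h) (summable_PsiCoeff_mul_pow (by rwa [mul_neg, norm_neg]))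
    (summable_PsiCoeff_mul_pow hw)
  have hval : (-(h / 2) : ℂ) * -(I * b) = ((h * b / 2 : ℝ) : ℂ) * I := by push_cast; ring
  refine ⟨?_, ?_, ?_, ?_, ?_, ?_⟩
  · rw [mul_smul_comm,
      mul_tanhMatC_smul_eq_smul hleft0 htanh (by simpa using Real.pi_div_two_pos)]
    simp
  · rw [mul_smul_comm, mul_tanhMatC_smul_eq_smul hleft1 htanh (by rwa [mul_neg, norm_neg]), hval,
      tanh_mul_I, ← ofReal_tan, smul_smul]
    congr 1
    ring
  · rw [mul_smul_comm, mul_tanhMatC_smul_eq_smul hleftm1 htanh hz, ← neg_neg (_ * (I * _)),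
      ← mul_neg, hval, tanh_neg, tanh_mul_I, ← ofReal_tan, smul_smul]
    congr 1
    ring
  · rw [mul_PsiMatC_smul_eq_smul hleft0 hPsi (by simpa using Real.pi_pos), mul_zero, PsiFun_zero,
      one_smul]
  · rw [mul_PsiMatC_smul_eq_smul hleft1 hPsi (by rwa [mul_neg, norm_neg])]
    congr 2
    ring
  · rw [mul_PsiMatC_smul_eq_smul hleftm1 hPsi hw]
    congr 2
    ring

/-- Spectral action of the two-step matrix `(2/h)tanh(−(h/2)B̂)` and of the
filter `Ψ(−hB̂)` on the eigenprojections `P₀, P₁, P₋₁` of `B̂` for the eigenvalues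
`0, −ib, +ib`: (i) `P₀ (2/h)tanh(−(h/2)B̂) = 0`; (ii) `P_{±1} (2/h)tanh(−(h/2)B̂)
= ±i(2/h)tan(hb/2) P_{±1}`; (iii) `P₀ Ψ(−hB̂) = P₀` and `P_{±1} Ψ(−hB̂) = Ψ(±ihb) P_{±1}`. -/
theorem stmt6 (B : Fin 3 → ℝ) (h : ℝ) (hb : 0 < enorm3 B) (hh : 0 < h)
    (hres : h * enorm3 B < pi)
    (P0 P1 Pm1 : Matrix (Fin 3) (Fin 3) ℂ)
    (hsum : P0 + P1 + Pm1 = 1)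
    (horth0 : P0.IsHermitian) (hidem0 : P0 * P0 = P0)
    (horth1 : P1.IsHermitian) (hidem1 : P1 * P1 = P1)
    (horthm1 : Pm1.IsHermitian) (hidemm1 : Pm1 * Pm1 = Pm1)
    (heig0 : hatC B * P0 = 0)
    (heig1 : hatC B * P1 = (-(Complex.I * (enorm3 B : ℂ))) • P1)
    (heigm1 : hatC B * Pm1 = (Complex.I * (enorm3 B : ℂ)) • Pm1) :
    P0 * ((2 / h : ℂ) • tanhMatC ((-(h / 2) : ℂ) • hatC B)) = 0 ∧
    P1 * ((2 / h : ℂ) • tanhMatC ((-(h / 2) : ℂ) • hatC B)) =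
        (Complex.I * (2 / h) * Real.tan (h * enorm3 B / 2)) • P1 ∧
    Pm1 * ((2 / h : ℂ) • tanhMatC ((-(h / 2) : ℂ) • hatC B)) =
        (-(Complex.I * (2 / h) * Real.tan (h * enorm3 B / 2))) • Pm1 ∧
    P0 * PsiMatC ((-h : ℂ) • hatC B) = P0 ∧
    P1 * PsiMatC ((-h : ℂ) • hatC B) =
        PsiFun (Complex.I * (h * enorm3 B)) • P1 ∧
    Pm1 * PsiMatC ((-h : ℂ) • hatC B) =
        PsiFun (-(Complex.I * (h * enorm3 B))) • Pm1 :=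
  stmt6_general B h hb hh hres P0 P1 Pm1 hsum horth0 horth1 hidem1 horthm1 hidemm1 heig0 heig1
    heigm1
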